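/- For a bounded lattice L, the complete lattice of saturated filters of its dual L-space, with the embedding a ↦ θ(a) = {x : a ∈ x}, is a canonical extension of L: it is dense (every element is both a join of closed elements and a meet of open elements) and compact. -/

import Mathlib

/-!
A subbasic open set `θ a` or `(θ a)ᶜ` of the dual space is upward or downward closed, so an
open set containing a point `x` contains every point between `x` and some principal filter
`↑a ⊆ x`; an open filter therefore contains `θ a`, and open filters are exactly the joins of
the `θ a`. Saturated filters are by definition meets of open filters, and they are joins of the
closed elements `{y | x ⊆ y}`. For compactness, if `⋂ θ[A] ⊆ ⋁ θ[B]` but no finite meet from `A`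
lies below a finite join from `B`, the filter generated by `A` is a point of `⋂ θ[A]` outside
the open filter of points containing a finite join from `B`, which contains `⋁ θ[B]`.
-/

/-- A filter of a meet-semilattice: an upward-closed subset closed under binary
meets. -/
def IsFilt {X : Type*} [SemilatticeInf X] (s : Set X) : Prop :=
  (∀ x y : X, x ∈ s → x ≤ y → y ∈ s) ∧ ∀ x y : X, x ∈ s → y ∈ s → x ⊓ y ∈ s

variable (L : Type*) [Lattice L] [BoundedOrder L]

/-- The points of the dual L-space of `L`: its proper nonempty filters. -/
def Pt : Type _ := {x : Set L // IsFilt x ∧ x.Nonempty ∧ ⊥ ∉ x}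

/-- The basic sets `θ a = {x : a ∈ x}`. -/
def theta (a : L) : Set (Pt L) := {x : Pt L | a ∈ x.1}

/-- The Stone-type topology on the dual space of `L`. -/
def ptTop : TopologicalSpace (Pt L) :=
  TopologicalSpace.generateFrom
    ({s | ∃ a : L, s = theta L a} ∪ {s | ∃ a : L, s = (theta L a)ᶜ})

/-- A filter of the dual space (points ordered by inclusion, meets given by
intersections). -/
def IsFiltPt (F : Set (Pt L)) : Prop :=
  (∀ x y : Pt L, x ∈ F → x.1 ⊆ y.1 → y ∈ F) ∧
  (∀ x y : Pt L, x ∈ F → y ∈ F → ∀ z : Pt L, z.1 = x.1 ∩ y.1 → z ∈ F)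

/-- A saturated filter: one that is the intersection of all open filters
containing it. -/
def Sat (b : Set (Pt L)) : Prop :=
  IsFiltPt L b ∧
  b = ⋂₀ {o : Set (Pt L) | @IsOpen _ (ptTop L) o ∧ IsFiltPt L o ∧ b ⊆ o}

/-- The join of a family of saturated filters in the complete lattice of
saturated filters: the smallest saturated filter containing all of them. -/
def satJoin (S : Set (Set (Pt L))) : Set (Pt L) :=
  ⋂₀ {c : Set (Pt L) | Sat L c ∧ ∀ t ∈ S, t ⊆ c}

/-- The closed elements of the completion: meets (intersections) of elements
of the image of `θ`. -/
def closedEl (c : Set (Pt L)) : Prop := ∃ A : Set L, c = ⋂ a ∈ A, theta L a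

/-- The open elements of the completion: joins of elements of the image of
`θ`. -/
def openEl (o : Set (Pt L)) : Prop :=
  ∃ B : Set L, o = satJoin L {s | ∃ b ∈ B, s = theta L b}


section

variable {L}

namespace Pt

lemma mem_of_le (x : Pt L) {a b : L} (ha : a ∈ x.1) (hab : a ≤ b) : b ∈ x.1 :=
  x.2.1.1 a b ha hab

lemma inf_mem (x : Pt L) {a b : L} (ha : a ∈ x.1) (hb : b ∈ x.1) : a ⊓ b ∈ x.1 :=
  x.2.1.2 a b ha hb

lemma top_mem (x : Pt L) : (⊤ : L) ∈ x.1 :=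
  let ⟨_, ha⟩ := x.2.2.1
  x.mem_of_le ha le_top

lemma ne_bot_of_mem (x : Pt L) {a : L} (ha : a ∈ x.1) : a ≠ ⊥ :=
  fun h => x.2.2.2 (h ▸ ha)

lemma finset_inf_mem (x : Pt L) {E : Finset L} (hE : ∀ a ∈ E, a ∈ x.1) : E.inf id ∈ x.1 :=
  Finset.inf_induction x.top_mem (fun _ ha _ hb => x.inf_mem ha hb) hE

def principal (a : L) (ha : a ≠ ⊥) : Pt L :=
  ⟨{b | a ≤ b}, ⟨fun _ _ hb hbc => hb.trans hbc, fun _ _ hb hc => le_inf hb hc⟩,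
    ⟨a, le_rfl⟩, fun h => ha (le_bot_iff.mp h)⟩

lemma principal_mem_theta (a : L) (ha : a ≠ ⊥) : principal a ha ∈ theta L a :=
  le_refl a

lemma principal_subset {x : Pt L} {a : L} (ha : a ∈ x.1) :
    (principal a (x.ne_bot_of_mem ha)).1 ⊆ x.1 :=
  fun _ hb => x.mem_of_le ha hb

def up (x : Pt L) : Set (Pt L) := {y | x.1 ⊆ y.1}

end Pt

lemma theta_bot : theta L ⊥ = ∅ :=
  Set.eq_empty_of_forall_notMem fun x => x.2.2.2

lemma theta_top : theta L ⊤ = Set.univ :=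
  Set.eq_univ_of_forall Pt.top_mem

lemma theta_inf (a b : L) : theta L (a ⊓ b) = theta L a ∩ theta L b := by
  ext x
  exact ⟨fun h => ⟨x.mem_of_le h inf_le_left, x.mem_of_le h inf_le_right⟩,
    fun h => x.inf_mem h.1 h.2⟩

lemma theta_subset_theta {a b : L} : theta L a ⊆ theta L b ↔ a ≤ b := by
  refine ⟨fun h => ?_, fun hab x hx => x.mem_of_le hx hab⟩
  rcases eq_or_ne a ⊥ with rfl | ha
  · exact bot_le
  · exact h (Pt.principal_mem_theta a ha)

lemma theta_injective : Function.Injective (theta L) := fun _ _ h =>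
  le_antisymm (theta_subset_theta.1 h.le) (theta_subset_theta.1 h.ge)

lemma isFiltPt_theta (a : L) : IsFiltPt L (theta L a) :=
  ⟨fun _ _ hx hxy => hxy hx, fun _ _ hx hy z hz => show a ∈ z.1 from hz ▸ ⟨hx, hy⟩⟩

lemma isFiltPt_sInter {S : Set (Set (Pt L))} (hS : ∀ s ∈ S, IsFiltPt L s) :
    IsFiltPt L (⋂₀ S) :=
  ⟨fun x y hx hxy s hs => (hS s hs).1 x y (hx s hs) hxy,
    fun x y hx hy z hz s hs => (hS s hs).2 x y (hx s hs) (hy s hs) z hz⟩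

lemma IsFiltPt.theta_sup_subset {c : Set (Pt L)} (hc : IsFiltPt L c) {a b : L}
    (ha : theta L a ⊆ c) (hb : theta L b ⊆ c) : theta L (a ⊔ b) ⊆ c := by
  rcases eq_or_ne a ⊥ with rfl | ha₀
  · simpa using hb
  rcases eq_or_ne b ⊥ with rfl | hb₀
  · simpa using ha
  intro x hx
  have hprincipal : Pt.principal (a ⊔ b) (x.ne_bot_of_mem hx) ∈ c :=
    hc.2 _ _ (ha (Pt.principal_mem_theta a ha₀)) (hb (Pt.principal_mem_theta b hb₀)) _
      (Set.ext fun _ => sup_le_iff)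
  exact hc.1 _ x hprincipal (Pt.principal_subset hx)

lemma IsFiltPt.theta_finset_sup_subset {c : Set (Pt L)} (hc : IsFiltPt L c) {E : Finset L}
    (hE : ∀ b ∈ E, theta L b ⊆ c) : theta L (E.sup id) ⊆ c :=
  Finset.sup_induction (p := fun a => theta L a ⊆ c) (by simp [theta_bot])
    (fun _ ha _ hb => hc.theta_sup_subset ha hb) hE

attribute [local instance] ptTop

lemma isOpen_theta (a : L) : IsOpen (theta L a) :=
  TopologicalSpace.isOpen_generateFrom_of_mem (Or.inl ⟨a, rfl⟩)

lemma exists_mem_forall_mem_of_isOpen {o : Set (Pt L)} (ho : IsOpen o) {x : Pt L}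
    (hx : x ∈ o) : ∃ a ∈ x.1, ∀ y : Pt L, a ∈ y.1 → y.1 ⊆ x.1 → y ∈ o := by
  replace ho : TopologicalSpace.GenerateOpen _ o := ho
  induction ho generalizing x with
  | basic s hs =>
    rcases hs with ⟨b, rfl⟩ | ⟨b, rfl⟩
    · exact ⟨b, hx, fun y hy _ => hy⟩
    · exact ⟨⊤, x.top_mem, fun y _ hyx hy => hx (hyx hy)⟩
  | univ => exact ⟨⊤, x.top_mem, fun _ _ _ => trivial⟩
  | inter s t _ _ ihs iht =>
    obtain ⟨a, ha, has⟩ := ihs hx.1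
    obtain ⟨b, hb, hbt⟩ := iht hx.2
    exact ⟨a ⊓ b, x.inf_mem ha hb, fun y hy hyx =>
      ⟨has y (y.mem_of_le hy inf_le_left) hyx, hbt y (y.mem_of_le hy inf_le_right) hyx⟩⟩
  | sUnion T _ ih =>
    obtain ⟨t, ht, hxt⟩ := hx
    obtain ⟨a, ha, hat⟩ := ih t ht hxt
    exact ⟨a, ha, fun y hy hyx => ⟨t, ht, hat y hy hyx⟩⟩

lemma exists_theta_subset_of_isOpen {o : Set (Pt L)} (ho : IsOpen o) (hf : IsFiltPt L o)
    {x : Pt L} (hx : x ∈ o) : ∃ a ∈ x.1, theta L a ⊆ o := by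
  obtain ⟨a, ha, hao⟩ := exists_mem_forall_mem_of_isOpen ho hx
  have hprincipal : Pt.principal a (x.ne_bot_of_mem ha) ∈ o :=
    hao _ (Pt.principal_mem_theta a (x.ne_bot_of_mem ha)) (Pt.principal_subset ha)
  exact ⟨a, ha, fun y hy => hf.1 _ y hprincipal (Pt.principal_subset hy)⟩

lemma sat_of_isOpen {o : Set (Pt L)} (ho : IsOpen o) (hf : IsFiltPt L o) : Sat L o :=
  ⟨hf, (Set.subset_sInter fun _ h => h.2.2).antisymm
    (Set.sInter_subset_of_mem ⟨ho, hf, subset_rfl⟩)⟩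

lemma sat_theta (a : L) : Sat L (theta L a) :=
  sat_of_isOpen (isOpen_theta a) (isFiltPt_theta a)

lemma sat_sInter {S : Set (Set (Pt L))} (hS : ∀ s ∈ S, Sat L s) : Sat L (⋂₀ S) := by
  refine ⟨isFiltPt_sInter fun s hs => (hS s hs).1,
    (Set.subset_sInter fun _ h => h.2.2).antisymm (Set.subset_sInter fun s hs => ?_)⟩
  refine (Set.sInter_subset_sInter fun o ho => ?_).trans (hS s hs).2.ge
  exact ⟨ho.1, ho.2.1, (Set.sInter_subset_of_mem hs).trans ho.2.2⟩

lemma sat_satJoin (S : Set (Set (Pt L))) : Sat L (satJoin L S) :=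
  sat_sInter fun _ h => h.1

lemma subset_satJoin {S : Set (Set (Pt L))} {t : Set (Pt L)} (ht : t ∈ S) :
    t ⊆ satJoin L S :=
  Set.subset_sInter fun _ hc => hc.2 t ht

lemma satJoin_subset {S : Set (Set (Pt L))} {c : Set (Pt L)} (hc : Sat L c)
    (h : ∀ t ∈ S, t ⊆ c) : satJoin L S ⊆ c :=
  Set.sInter_subset_of_mem ⟨hc, h⟩

lemma satJoin_mono {S T : Set (Set (Pt L))} (h : S ⊆ T) : satJoin L S ⊆ satJoin L T :=
  satJoin_subset (sat_satJoin T) fun _ ht => subset_satJoin (h ht)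

lemma satJoin_eq {S : Set (Set (Pt L))} {b : Set (Pt L)} (hb : Sat L b)
    (hS : ∀ t ∈ S, t ⊆ b) (hcover : b ⊆ ⋃₀ S) : satJoin L S = b :=
  (satJoin_subset hb hS).antisymm fun _ hx =>
    let ⟨_, ht, hxt⟩ := hcover hx
    subset_satJoin ht hxt

lemma theta_sup (a b : L) : theta L (a ⊔ b) = satJoin L {theta L a, theta L b} :=
  ((sat_satJoin _).1.theta_sup_subset (subset_satJoin (by simp))
      (subset_satJoin (by simp))).antisymm
    (satJoin_subset (sat_theta _) (by
      rintro t (rfl | rfl) <;> exact theta_subset_theta.2 (by simp)))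

lemma sat_of_closedEl {c : Set (Pt L)} (hc : closedEl L c) : Sat L c := by
  obtain ⟨A, rfl⟩ := hc
  rw [← Set.sInter_image]
  exact sat_sInter (by rintro _ ⟨a, -, rfl⟩; exact sat_theta a)

lemma closedEl_up (x : Pt L) : closedEl L x.up :=
  ⟨x.1, by ext y; simp [Pt.up, theta, Set.subset_def]⟩

lemma openEl_of_isOpen {o : Set (Pt L)} (ho : IsOpen o) (hf : IsFiltPt L o) : openEl L o := by
  refine ⟨{a | theta L a ⊆ o}, (satJoin_eq (sat_of_isOpen ho hf) ?_ fun x hx => ?_).symm⟩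
  · rintro _ ⟨a, hao, rfl⟩
    exact hao
  · obtain ⟨a, ha, hao⟩ := exists_theta_subset_of_isOpen ho hf hx
    exact ⟨theta L a, ⟨a, hao, rfl⟩, ha⟩

lemma Sat.exists_closedEl_eq_satJoin {b : Set (Pt L)} (hb : Sat L b) :
    ∃ C : Set (Set (Pt L)), (∀ c ∈ C, closedEl L c ∧ Sat L c) ∧ b = satJoin L C := by
  refine ⟨Pt.up '' b, ?_, (satJoin_eq hb ?_ ?_).symm⟩
  · rintro _ ⟨x, -, rfl⟩
    exact ⟨closedEl_up x, sat_of_closedEl (closedEl_up x)⟩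
  · rintro _ ⟨x, hx, rfl⟩ y hy
    exact hb.1.1 x y hx hy
  · exact fun x hx => ⟨x.up, ⟨x, hx, rfl⟩, show x.1 ⊆ x.1 from subset_rfl⟩

lemma Sat.exists_openEl_eq_sInter {b : Set (Pt L)} (hb : Sat L b) :
    ∃ O : Set (Set (Pt L)), (∀ o ∈ O, openEl L o ∧ Sat L o) ∧ b = ⋂₀ O := by
  refine ⟨_, ?_, hb.2⟩
  rintro o ⟨ho, hf, -⟩
  exact ⟨openEl_of_isOpen ho hf, sat_of_isOpen ho hf⟩

def filterGen (A : Set L) : Set L := {z | ∃ E : Finset L, ↑E ⊆ A ∧ E.inf id ≤ z}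

lemma subset_filterGen {A : Set L} : A ⊆ filterGen A :=
  fun a ha => ⟨{a}, by simpa using ha, by simp⟩

lemma isFilt_filterGen (A : Set L) : IsFilt (filterGen A) := by
  classical
  refine ⟨fun _ _ ⟨E, hEA, hE⟩ hz => ⟨E, hEA, hE.trans hz⟩, ?_⟩
  rintro _ _ ⟨E₁, hE₁A, hE₁⟩ ⟨E₂, hE₂A, hE₂⟩
  refine ⟨E₁ ∪ E₂, by simp [hE₁A, hE₂A], ?_⟩
  rw [Finset.inf_union]
  exact inf_le_inf hE₁ hE₂

def supOpen (B : Set L) : Set (Pt L) := {x | ∃ E : Finset L, ↑E ⊆ B ∧ E.sup id ∈ x.1}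

lemma isOpen_supOpen (B : Set L) : IsOpen (supOpen B) := by
  have : supOpen B = ⋃ E ∈ {E : Finset L | ↑E ⊆ B}, theta L (E.sup id) := by
    ext x
    simp [supOpen, theta]
  rw [this]
  exact isOpen_biUnion fun E _ => isOpen_theta _

lemma isFiltPt_supOpen (B : Set L) : IsFiltPt L (supOpen B) := by
  classical
  refine ⟨fun _ _ ⟨E, hEB, hE⟩ hxy => ⟨E, hEB, hxy hE⟩, ?_⟩
  rintro x y ⟨E₁, hE₁B, hE₁⟩ ⟨E₂, hE₂B, hE₂⟩ z hz
  refine ⟨E₁ ∪ E₂, by simp [hE₁B, hE₂B], ?_⟩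
  rw [hz, Finset.sup_union]
  exact ⟨x.mem_of_le hE₁ le_sup_left, y.mem_of_le hE₂ le_sup_right⟩

lemma theta_subset_supOpen {B : Set L} {b : L} (hb : b ∈ B) : theta L b ⊆ supOpen B :=
  fun x hx => ⟨{b}, by simpa using hb, by rwa [Finset.sup_singleton]⟩

lemma exists_finset_inf_le_sup {A B : Set L}
    (h : ⋂ a ∈ A, theta L a ⊆ satJoin L (theta L '' B)) :
    ∃ E' E : Finset L, ↑E' ⊆ A ∧ ↑E ⊆ B ∧ E'.inf id ≤ E.sup id := by
  by_cases hbot : (⊥ : L) ∈ filterGen A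
  · obtain ⟨E', hE'A, hE'⟩ := hbot
    exact ⟨E', ∅, hE'A, by simp, hE'.trans bot_le⟩
  let F : Pt L := ⟨filterGen A, isFilt_filterGen A, ⟨⊤, ∅, by simp, le_top⟩, hbot⟩
  have hF : F ∈ satJoin L (theta L '' B) :=
    h (Set.mem_iInter₂.2 fun _ ha => subset_filterGen ha)
  have hsupOpen : satJoin L (theta L '' B) ⊆ supOpen B :=
    satJoin_subset (sat_of_isOpen (isOpen_supOpen B) (isFiltPt_supOpen B))
      (by rintro _ ⟨b, hb, rfl⟩; exact theta_subset_supOpen hb)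
  obtain ⟨E, hEB, E', hE'A, hle⟩ := hsupOpen hF
  exact ⟨E', E, hE'A, hEB, hle⟩

lemma exists_finite_of_sInter_subset_satJoin {CS OS : Set (Set (Pt L))}
    (hCS : ∀ c ∈ CS, closedEl L c) (hOS : ∀ o ∈ OS, openEl L o)
    (h : ⋂₀ CS ⊆ satJoin L OS) :
    ∃ CS' OS' : Finset (Set (Pt L)), ↑CS' ⊆ CS ∧ ↑OS' ⊆ OS ∧
      ⋂₀ (CS' : Set (Set (Pt L))) ⊆ satJoin L (OS' : Set (Set (Pt L))) := by
  classical
  set A := {a | ∃ c ∈ CS, c ⊆ theta L a}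
  set B := {b | ∃ t ∈ OS, theta L b ⊆ t}
  have hA : ⋂ a ∈ A, theta L a ⊆ ⋂₀ CS := by
    intro x hx c hc
    obtain ⟨Ac, rfl⟩ := hCS c hc
    exact Set.mem_iInter₂.2 fun a ha =>
      Set.mem_iInter₂.1 hx a ⟨_, hc, Set.biInter_subset_of_mem ha⟩
  have hB : satJoin L OS ⊆ satJoin L (theta L '' B) := by
    refine satJoin_subset (sat_satJoin _) fun t ht => ?_
    obtain ⟨Bt, rfl⟩ := hOS t ht
    refine satJoin_mono ?_
    rintro _ ⟨b, hb, rfl⟩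
    exact ⟨b, ⟨_, ht, subset_satJoin ⟨b, hb, rfl⟩⟩, rfl⟩
  obtain ⟨E', E, hE'A, hEB, hle⟩ := exists_finset_inf_le_sup (hA.trans (h.trans hB))
  choose! f hfCS hf using fun a (ha : a ∈ A) => ha
  choose! g hgOS hg using fun b (hb : b ∈ B) => hb
  refine ⟨E'.image f, E.image g, ?_, ?_, ?_⟩
  · rw [Finset.coe_image, Set.image_subset_iff]
    exact fun a ha => hfCS a (hE'A ha)
  · rw [Finset.coe_image, Set.image_subset_iff]
    exact fun b hb => hgOS b (hEB hb)
  calc ⋂₀ ↑(E'.image f)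
      ⊆ theta L (E'.inf id) := fun x hx => x.finset_inf_mem fun a ha =>
        hf a (hE'A ha) (hx _ (by simpa using ⟨a, ha, rfl⟩))
    _ ⊆ theta L (E.sup id) := theta_subset_theta.2 hle
    _ ⊆ satJoin L ↑(E.image g) := (sat_satJoin _).1.theta_finset_sup_subset fun b hb =>
        (hg b (hEB hb)).trans (subset_satJoin (by simpa using ⟨b, hb, rfl⟩))

lemma sInter_subset_satJoin_iff {CS OS : Set (Set (Pt L))}
    (hCS : ∀ c ∈ CS, closedEl L c) (hOS : ∀ o ∈ OS, openEl L o) :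
    ⋂₀ CS ⊆ satJoin L OS ↔
      ∃ CS' OS' : Finset (Set (Pt L)), ↑CS' ⊆ CS ∧ ↑OS' ⊆ OS ∧
        ⋂₀ (CS' : Set (Set (Pt L))) ⊆ satJoin L (OS' : Set (Set (Pt L))) :=
  ⟨exists_finite_of_sInter_subset_satJoin hCS hOS, fun ⟨_, _, hCS', hOS', h⟩ =>
    (Set.sInter_subset_sInter hCS').trans (h.trans (satJoin_mono hOS'))⟩

end

/-- The complete lattice of saturated filters of the dual L-space of a bounded
lattice `L`, with the embedding `θ`, is a canonical extension of `L`: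
`θ` is a lattice embedding into the saturated filters, the completion is
dense (every element is a join of closed elements and a meet of open
elements), and it is compact. -/
theorem saturated_filters_are_canonical_extension :
    (∀ a : L, Sat L (theta L a)) ∧
    Function.Injective (theta L) ∧
    (∀ a b : L, theta L (a ⊓ b) = theta L a ∩ theta L b) ∧
    (∀ a b : L, theta L (a ⊔ b) = satJoin L {theta L a, theta L b}) ∧
    theta L (⊤ : L) = Set.univ ∧ theta L (⊥ : L) = ∅ ∧
    (∀ b : Set (Pt L), Sat L b →
      (∃ C : Set (Set (Pt L)), (∀ c ∈ C, closedEl L c ∧ Sat L c) ∧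
        b = satJoin L C) ∧
      (∃ O : Set (Set (Pt L)), (∀ o ∈ O, openEl L o ∧ Sat L o) ∧
        b = ⋂₀ O)) ∧
    (∀ CS OS : Set (Set (Pt L)),
      (∀ c ∈ CS, closedEl L c) → (∀ o ∈ OS, openEl L o) →
      (⋂₀ CS ⊆ satJoin L OS ↔
        ∃ CS' OS' : Finset (Set (Pt L)), ↑CS' ⊆ CS ∧ ↑OS' ⊆ OS ∧
          ⋂₀ (CS' : Set (Set (Pt L))) ⊆ satJoin L (OS' : Set (Set (Pt L))))) :=
  ⟨sat_theta, theta_injective, theta_inf, theta_sup, theta_top, theta_bot,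
    fun _ hb => ⟨hb.exists_closedEl_eq_satJoin, hb.exists_openEl_eq_sInter⟩,
    fun _ _ => sInter_subset_satJoin_iff⟩
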